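/- arXiv:0907.5412 — 2 statements merged into one kernel-verified Lean document; each statement's English description precedes it below -/
import Mathlib

section
/- The function Q(x) = 3^{1/4} / cosh^{1/2}(2x) satisfies the ODE Q''(x) + Q(x)^5 = Q(x) for all real x. -/
/-!
For `g x = cosh (β x) ^ r`, differentiating twice and using `sinh² = cosh² - 1` gives
`g'' = r²β² g - r(r-1)β² cosh (β x) ^ (r-2)`. With `β = 2`, `r = -1/2` this reads `g'' = g - 3 g⁵`,
and the factor `3^{1/4}` turns `3 g⁵` into `Q⁵` because `(3^{1/4})⁴ = 3`.
-/

open Real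

namespace Real

theorem hasDerivAt_cosh_mul_rpow (β r x : ℝ) :
    HasDerivAt (fun x => cosh (β * x) ^ r) (r * β * sinh (β * x) * cosh (β * x) ^ (r - 1)) x := by
  convert (hasDerivAt_const_mul β).cosh.rpow_const (p := r) (Or.inl (cosh_pos (β * x)).ne') using 1
  ring

theorem deriv_cosh_mul_rpow (β r : ℝ) :
    deriv (fun x => cosh (β * x) ^ r) = fun x => r * β * sinh (β * x) * cosh (β * x) ^ (r - 1) :=
  funext fun x => (hasDerivAt_cosh_mul_rpow β r x).deriv

theorem deriv_deriv_cosh_mul_rpow (β r x : ℝ) :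
    deriv (deriv fun x => cosh (β * x) ^ r) x =
      r ^ 2 * β ^ 2 * cosh (β * x) ^ r - r * (r - 1) * β ^ 2 * cosh (β * x) ^ (r - 2) := by
  have hderiv : HasDerivAt (fun x => r * β * sinh (β * x) * cosh (β * x) ^ (r - 1))
      (r * β * (cosh (β * x) * β) * cosh (β * x) ^ (r - 1) +
        r * β * sinh (β * x) * ((r - 1) * β * sinh (β * x) * cosh (β * x) ^ (r - 1 - 1))) x :=
    ((hasDerivAt_const_mul β).sinh.const_mul (r * β)).mul (hasDerivAt_cosh_mul_rpow β (r - 1) x)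
  rw [deriv_cosh_mul_rpow, hderiv.deriv]
  have hpos := cosh_pos (β * x)
  have hr : cosh (β * x) ^ r = cosh (β * x) ^ (r - 2) * cosh (β * x) ^ 2 := by
    rw [← rpow_natCast, ← rpow_add hpos]; norm_num
  have hr1 : cosh (β * x) ^ (r - 1) = cosh (β * x) ^ (r - 2) * cosh (β * x) := by
    rw [← rpow_add_one hpos.ne']; ring_nf
  rw [hr, hr1, show r - 1 - 1 = r - 2 by ring]
  linear_combination (r * (r - 1) * β ^ 2 * cosh (β * x) ^ (r - 2)) * sinh_sq (β * x)

end Real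

/-- The ground state `Q(x) = 3^{1/4} / cosh^{1/2}(2x)` satisfies `Q'' + Q^5 = Q`. -/
theorem ground_state_ODE (Q : ℝ → ℝ)
    (hQ : ∀ x, Q x = (3 : ℝ) ^ ((1 : ℝ)/4) * (Real.cosh (2*x)) ^ (-(1 : ℝ)/2)) :
    ∀ x, deriv (deriv Q) x + Q x ^ 5 = Q x := by
  intro x
  obtain rfl : Q = fun x => (3 : ℝ) ^ ((1 : ℝ)/4) * cosh (2 * x) ^ (-(1 : ℝ)/2) := funext hQ
  have hc : ((3 : ℝ) ^ ((1 : ℝ)/4)) ^ 4 = 3 := by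
    simpa using rpow_inv_natCast_pow (x := (3 : ℝ)) (n := 4) (by norm_num) (by norm_num)
  have hpow : (cosh (2 * x) ^ (-(1 : ℝ)/2)) ^ 5 = cosh (2 * x) ^ (-(1 : ℝ)/2 - 2) := by
    rw [← rpow_mul_natCast (cosh_pos _).le]; norm_num
  simp only [deriv_const_mul_field', deriv_deriv_cosh_mul_rpow, mul_pow, hpow]
  linear_combination (3 : ℝ) ^ ((1 : ℝ)/4) * cosh (2 * x) ^ (-(1 : ℝ)/2 - 2) * hc
end

section
/- Let R¹ and R² be parallelograms in ℝ² of the form Rⁱ = {(t,x) : |ξⁱ(t + sⁱ)| ≤ (λⁱ)² and |x − xⁱ + 3(ξⁱ)²(t + sⁱ)| ≤ λⁱ}, with λⁱ > 0, ξⁱ > 0, xⁱ, sⁱ ∈ ℝ and ξ¹ ≠ ξ². Then the Lebesgue measure of R¹ ∩ R² is at most C λ¹ λ² / ((ξ¹ + ξ²)|ξ¹ − ξ²|) for an absolute constant C. -/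
/-!
In the coordinates `v = x - x¹ + 3(ξ¹)²(t + s¹)`, `w = x - x² + 3(ξ²)²(t + s²)` the intersection of
the two parallelograms lies in the rectangle `|v| ≤ λ¹, |w| ≤ λ²` of area `4λ¹λ²`, and this linear
change of variables has Jacobian `3|(ξ¹)² - (ξ²)²| = 3(ξ¹ + ξ²)|ξ¹ - ξ²|`.
-/

open MeasureTheory Metric

def slab (m a r : ℝ) : Set (ℝ × ℝ) := {p | |p.2 - (m * p.1 + a)| ≤ r}

noncomputable def slopeCoords (m₁ m₂ : ℝ) : ℝ × ℝ →ₗ[ℝ] ℝ × ℝ :=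
  Matrix.toLin (Module.Basis.finTwoProd ℝ) (Module.Basis.finTwoProd ℝ) !![-m₁, 1; -m₂, 1]

theorem slopeCoords_apply (m₁ m₂ : ℝ) (p : ℝ × ℝ) :
    slopeCoords m₁ m₂ p = (p.2 - m₁ * p.1, p.2 - m₂ * p.1) := by
  simp only [slopeCoords, Matrix.toLin_apply, Matrix.mulVec, dotProduct, Matrix.of_apply,
    Matrix.cons_val', Matrix.cons_val_fin_one, Module.Basis.coe_finTwoProd_repr, Fin.sum_univ_two,
    Matrix.cons_val_zero, Matrix.cons_val_one, Module.Basis.finTwoProd_zero,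
    Module.Basis.finTwoProd_one, Prod.smul_mk, smul_eq_mul, mul_one, mul_zero, Prod.mk_add_mk,
    add_zero, zero_add, Prod.mk.injEq]
  constructor <;> ring

theorem det_slopeCoords (m₁ m₂ : ℝ) : LinearMap.det (slopeCoords m₁ m₂) = m₂ - m₁ := by
  simp only [slopeCoords, LinearMap.det_toLin, Matrix.det_fin_two_of]
  ring

theorem slab_inter_slab_eq_preimage (m₁ m₂ a₁ a₂ r₁ r₂ : ℝ) :
    slab m₁ a₁ r₁ ∩ slab m₂ a₂ r₂ =
      slopeCoords m₁ m₂ ⁻¹' closedBall a₁ r₁ ×ˢ closedBall a₂ r₂ := by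
  ext p
  simp only [slab, Set.mem_inter_iff, Set.mem_ofPred_eq, Set.mem_preimage, slopeCoords_apply,
    Set.mem_prod, mem_closedBall, Real.dist_eq, sub_add_eq_sub_sub]

theorem volume_slab_inter_slab {m₁ m₂ : ℝ} (hm : m₁ ≠ m₂) (a₁ a₂ r₁ r₂ : ℝ) :
    volume (slab m₁ a₁ r₁ ∩ slab m₂ a₂ r₂) =
      ENNReal.ofReal (2 * r₁) * ENNReal.ofReal (2 * r₂) / ENNReal.ofReal |m₁ - m₂| := by
  have hdet : LinearMap.det (slopeCoords m₁ m₂) ≠ 0 := by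
    rw [det_slopeCoords]
    exact sub_ne_zero.mpr hm.symm
  rw [slab_inter_slab_eq_preimage, Measure.addHaar_preimage_linearMap _ hdet, det_slopeCoords,
    Measure.volume_eq_prod, Measure.prod_prod, Real.volume_closedBall, Real.volume_closedBall,
    abs_inv, abs_sub_comm, ENNReal.ofReal_inv_of_pos (abs_pos.mpr (sub_ne_zero.mpr hm)),
    ENNReal.div_eq_inv_mul]

theorem parallelogram_subset_slab (lam ξ x₀ s : ℝ) :
    {p : ℝ × ℝ | |ξ * (p.1 + s)| ≤ lam ^ 2 ∧ |p.2 - x₀ + 3 * ξ ^ 2 * (p.1 + s)| ≤ lam} ⊆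
      slab (-3 * ξ ^ 2) (x₀ - 3 * ξ ^ 2 * s) lam := by
  rintro p ⟨-, hp⟩
  show |_| ≤ (lam : ℝ)
  convert hp using 2
  ring

/-- Area of intersection of two slanted parallelograms. -/
theorem parallelogram_intersection_area :
    ∃ C : ℝ, 0 < C ∧
      ∀ (lam₁ lam₂ ξ₁ ξ₂ x₁ x₂ s₁ s₂ : ℝ),
        0 < lam₁ → 0 < lam₂ → 0 < ξ₁ → 0 < ξ₂ → ξ₁ ≠ ξ₂ →
        volume ({p : ℝ × ℝ | |ξ₁ * (p.1 + s₁)| ≤ lam₁ ^ 2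
                    ∧ |p.2 - x₁ + 3 * ξ₁ ^ 2 * (p.1 + s₁)| ≤ lam₁}
                ∩ {p : ℝ × ℝ | |ξ₂ * (p.1 + s₂)| ≤ lam₂ ^ 2
                    ∧ |p.2 - x₂ + 3 * ξ₂ ^ 2 * (p.1 + s₂)| ≤ lam₂})
          ≤ ENNReal.ofReal (C * lam₁ * lam₂ / ((ξ₁ + ξ₂) * |ξ₁ - ξ₂|)) := by
  refine ⟨4 / 3, by norm_num, fun lam₁ lam₂ ξ₁ ξ₂ x₁ x₂ s₁ s₂ hlam₁ hlam₂ hξ₁ hξ₂ hne => ?_⟩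
  have hslopes : |-3 * ξ₁ ^ 2 - -3 * ξ₂ ^ 2| = 3 * ((ξ₁ + ξ₂) * |ξ₁ - ξ₂|) := by
    rw [show -3 * ξ₁ ^ 2 - -3 * ξ₂ ^ 2 = -3 * ((ξ₁ + ξ₂) * (ξ₁ - ξ₂)) by ring, abs_mul, abs_mul,
      abs_of_pos (by linarith : 0 < ξ₁ + ξ₂)]
    norm_num
  have hpos : 0 < 3 * ((ξ₁ + ξ₂) * |ξ₁ - ξ₂|) := by
    have := abs_pos.mpr (sub_ne_zero.mpr hne)
    positivity
  have hslopes_ne : -3 * ξ₁ ^ 2 ≠ -3 * ξ₂ ^ 2 := fun h ↦ hpos.ne' <| by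
    rw [← hslopes, h, sub_self, abs_zero]
  calc _ ≤ volume (slab (-3 * ξ₁ ^ 2) (x₁ - 3 * ξ₁ ^ 2 * s₁) lam₁ ∩
          slab (-3 * ξ₂ ^ 2) (x₂ - 3 * ξ₂ ^ 2 * s₂) lam₂) :=
        measure_mono (Set.inter_subset_inter (parallelogram_subset_slab ..)
          (parallelogram_subset_slab ..))
    _ = ENNReal.ofReal (2 * lam₁ * (2 * lam₂) / (3 * ((ξ₁ + ξ₂) * |ξ₁ - ξ₂|))) := by
        rw [volume_slab_inter_slab hslopes_ne .., hslopes, ← ENNReal.ofReal_mul (by positivity),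
          ENNReal.ofReal_div_of_pos hpos]
    _ = _ := by
        congr 1
        generalize (ξ₁ + ξ₂) * |ξ₁ - ξ₂| = D
        ring
end
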